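/- Let (A, m) be a local ring with m nilpotent, residue field K = A/m, and let x(t), y(t) be tuples of power series in A[[t]] (of lengths n and m respectively) with f(x(t), y(t)) = 0 for polynomials f = (f₁,...,f_m) ∈ k[x,y]^m. Let δ = det(∂f_i/∂y_j). Suppose δ(x(t),y(t)) = q(t)u(t) with q a Weierstrass polynomial of degree d and u a unit in A[[t]]. Write y(t) = ȳ(t) + q(t)θ(t) with deg ȳ < d, and x(t) = x̄(t) + q(t)²ξ(t) with deg x̄ < 2d. Then Ad(Df(x̄(t),ȳ(t)))·f(x̄(t),ȳ(t)) ∈ q(t)²·A[t]^m and δ(x̄(t),ȳ(t)) ∈ q(t)·A[t], where Ad denotes the adjugate matrix and Df = (∂f_i/∂y_j). -/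

import Mathlib

open IsLocalRing Polynomial MvPolynomial

/-- A Weierstrass polynomial of degree `d` over a local ring. -/
def IsWeierstrassPolynomial {A : Type*} [CommRing A] [IsLocalRing A]
    (q : Polynomial A) (d : ℕ) : Prop :=
  q.Monic ∧ q.natDegree = d ∧ ∀ i < d, q.coeff i ∈ maximalIdeal A

/-!
Write `w = (x̄, ȳ)` and work in `A⟦t⟧` with `J = (q)`. Since `x ≡ x̄ mod q²` and `y ≡ ȳ mod q`,
first-order Taylor expansion around `w` gives `δ(w) ≡ δ(x, y) ≡ 0 mod q` and
`f(w) + Df(w)·qθ ≡ f(x, y) = 0 mod q²`. Multiplying by the adjugate turns `Df(w)·qθ` into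
`δ(w)·qθ ∈ (q²)`, so `Ad(Df(w))·f(w) ∈ (q²)`. Finally `q` and `q²` are distinguished and `A` is
separated for its nilpotent maximal ideal, so uniqueness of Weierstrass division gives
`q^e·A⟦t⟧ ∩ A[t] = q^e·A[t]`, which brings both memberships down to `A[t]`.
-/

theorem IsHausdorff.of_pow_eq_bot {R M : Type*} [CommRing R] [AddCommGroup M] [Module R M]
    {I : Ideal R} {N : ℕ} (hN : I ^ N = ⊥) : IsHausdorff I M :=
  ⟨fun x hx => by simpa [hN, SModEq.bot] using hx N⟩

theorem IsWeierstrassPolynomial.isDistinguishedAt {A : Type*} [CommRing A] [IsLocalRing A]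
    {q : A[X]} {d : ℕ} (hq : IsWeierstrassPolynomial q d) :
    q.IsDistinguishedAt (maximalIdeal A) :=
  ⟨⟨fun hn => hq.2.2 _ (hq.2.1 ▸ hn)⟩, hq.1⟩

/-- Uniqueness of Weierstrass division forces the remainder of `p` modulo `q` to vanish. -/
theorem Polynomial.IsDistinguishedAt.mem_span_singleton_of_coe_mem {A : Type*} [CommRing A]
    {I : Ideal A} [IsHausdorff I A] {q p : A[X]} (hq : q.IsDistinguishedAt I) (hI : I ≠ ⊤)
    (h : (p : PowerSeries A) ∈ Ideal.span {(q : PowerSeries A)}) : p ∈ Ideal.span {q} := by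
  obtain ⟨g, hg⟩ := Ideal.mem_span_singleton'.mp h
  have hord : ((PowerSeries.map (Ideal.Quotient.mk I)) (q : PowerSeries A)).order.toNat =
      q.natDegree := by
    rw [← hq.coe_natDegree_eq_order_map _ 1 (by simpa [← Ideal.ne_top_iff_one]) (mul_one _).symm,
      ENat.toNat_natCast]
  have : Nontrivial A := nontrivial_of_ne 1 0 fun h => hI ((I.eq_top_iff_one).mpr (h ▸ I.zero_mem))
  have hdeg : (p %ₘ q).degree < q.natDegree :=
    (degree_modByMonic_lt p hq.monic).trans_le degree_le_natDegree
  have hmod : (q : PowerSeries A) * (g - (p /ₘ q : A[X])) = (p %ₘ q : A[X]) := by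
    rw [modByMonic_eq_sub_mul_div p q, coe_sub, coe_mul, ← hg]
    ring
  obtain ⟨-, hzero⟩ := (hq.isWeierstrassDivisorAt hI).eq_zero_of_mul_eq (hord ▸ hdeg) hmod
  exact Ideal.mem_span_singleton.mpr ((modByMonic_eq_zero_iff_dvd hq.monic).mp hzero)

namespace MvPolynomial

variable {k S σ : Type*} [CommRing k] [CommRing S] [Algebra k S]

theorem aeval_sub_aeval_mem {J : Ideal S} (g : MvPolynomial σ k) {v w : σ → S}
    (hvw : ∀ s, v s - w s ∈ J) : aeval v g - aeval w g ∈ J := by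
  rw [← Ideal.Quotient.eq, ← Ideal.Quotient.mkₐ_eq_mk k, comp_aeval_apply, comp_aeval_apply]
  congr 2
  funext s
  exact Ideal.Quotient.eq.mpr (hvw s)

theorem aeval_sub_aeval_sub_sum_pderiv_mem_sq [Fintype σ] {J : Ideal S}
    (g : MvPolynomial σ k) {v w : σ → S} (hvw : ∀ s, v s - w s ∈ J) :
    aeval v g - aeval w g - ∑ s, aeval w (pderiv s g) * (v s - w s) ∈ J ^ 2 := by
  classical
  induction g using MvPolynomial.induction_on with
  | C a => simp
  | add p r hp hr =>
    convert add_mem hp hr using 1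
    simp only [map_add, add_mul, Finset.sum_add_distrib]
    ring
  | mul_X p t hp =>
    have hder : ∀ s, aeval w (pderiv s (p * X t)) =
        aeval w (pderiv s p) * w t + if s = t then aeval w p else 0 := by
      intro s
      rw [pderiv_mul, pderiv_X]
      rcases eq_or_ne s t with rfl | h <;> simp [*]
    have hsum : ∑ s, aeval w (pderiv s (p * X t)) * (v s - w s) =
        (∑ s, aeval w (pderiv s p) * (v s - w s)) * w t + aeval w p * (v t - w t) := by
      simp only [hder, add_mul, Finset.sum_add_distrib, ite_mul, zero_mul, Finset.sum_ite_eq',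
        Finset.mem_univ, if_true, Finset.sum_mul]
      congr 1
      exact Finset.sum_congr rfl fun s _ => by ring
    have hsplit : aeval v (p * X t) - aeval w (p * X t) -
          ∑ s, aeval w (pderiv s (p * X t)) * (v s - w s) =
        w t * (aeval v p - aeval w p - ∑ s, aeval w (pderiv s p) * (v s - w s)) +
          (v t - w t) * (aeval v p - aeval w p) := by
      rw [hsum]
      simp only [map_mul, aeval_X]
      ring
    rw [hsplit, sq]
    exact add_mem (Ideal.mul_mem_left _ _ (sq J ▸ hp))
      (Ideal.mul_mem_mul (hvw t) (aeval_sub_aeval_mem p hvw))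

end MvPolynomial

noncomputable def jacobianInr {k σ ι : Type*} [CommSemiring k] (f : ι → MvPolynomial (σ ⊕ ι) k) :
    Matrix ι ι (MvPolynomial (σ ⊕ ι) k) :=
  Matrix.of fun i j => pderiv (Sum.inr j) (f i)

section JacobianInr

open Matrix

variable {k σ ι : Type*} [CommRing k] [Fintype ι] [DecidableEq ι]
  (f : ι → MvPolynomial (σ ⊕ ι) k)

theorem map_adjugate_jacobianInr_mulVec {B C : Type*} [CommRing B] [CommRing C] [Algebra k B]
    [Algebra k C] (φ : B →ₐ[k] C) (v : σ ⊕ ι → B) (i : ι) :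
    φ ((((jacobianInr f).map (aeval v)).adjugate *ᵥ fun j => aeval v (f j)) i) =
      (((jacobianInr f).map (aeval (φ ∘ v))).adjugate *ᵥ fun j => aeval (φ ∘ v) (f j)) i := by
  have hadj := φ.map_adjugate ((jacobianInr f).map (aeval v))
  simp only [AlgHom.mapMatrix_apply, Matrix.map_map] at hadj
  rw [← φ.coe_toRingHom, RingHom.map_mulVec, φ.coe_toRingHom, hadj]
  congr 2
  · ext a b
    exact comp_aeval_apply v φ _
  · funext j
    exact comp_aeval_apply v φ _

theorem adjugate_jacobianInr_mulVec_mem [Fintype σ] {S : Type*} [CommRing S] [Algebra k S]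
    {J : Ideal S} {v w : σ ⊕ ι → S} (hf : ∀ i, aeval v (f i) = 0)
    (hx : ∀ i, v (.inl i) - w (.inl i) ∈ J ^ 2) (hy : ∀ j, v (.inr j) - w (.inr j) ∈ J)
    (hδ : aeval w (jacobianInr f).det ∈ J) (i : ι) :
    (((jacobianInr f).map (aeval w)).adjugate *ᵥ fun j => aeval w (f j)) i ∈ J ^ 2 := by
  set D := (jacobianInr f).map (aeval w)
  set F : ι → S := fun j => aeval w (f j)
  set e : ι → S := fun j => v (.inr j) - w (.inr j)
  have hvw : ∀ s, v s - w s ∈ J := by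
    rintro (i | j)
    exacts [Ideal.pow_le_self two_ne_zero (hx i), hy j]
  have hlin : ∀ j, (F + D *ᵥ e) j ∈ J ^ 2 := by
    intro j
    have htaylor := aeval_sub_aeval_sub_sum_pderiv_mem_sq (f j) hvw
    rw [hf j, Fintype.sum_sum_type] at htaylor
    have hxterms : ∑ l, aeval w (pderiv (.inl l) (f j)) * (v (.inl l) - w (.inl l)) ∈ J ^ 2 :=
      Ideal.sum_mem _ fun l _ => Ideal.mul_mem_left _ _ (hx l)
    convert sub_mem (neg_mem htaylor) hxterms using 1
    simp only [Pi.add_apply, F, D, e, mulVec, dotProduct, map_apply, jacobianInr, of_apply]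
    ring
  have hdet : D.det ∈ J := by
    simpa only [D, AlgHom.map_det, AlgHom.mapMatrix_apply] using hδ
  have hsplit : D.adjugate *ᵥ F = D.adjugate *ᵥ (F + D *ᵥ e) - D.det • e := by
    rw [mulVec_add, mulVec_mulVec, adjugate_mul, smul_mulVec, one_mulVec, add_sub_cancel_right]
  rw [hsplit, Pi.sub_apply, Pi.smul_apply, smul_eq_mul, sq]
  exact sub_mem (Ideal.sum_mem _ fun j _ => Ideal.mul_mem_left _ _ (sq J ▸ hlin j))
    (Ideal.mul_mem_mul hdet (hy i))

end JacobianInr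

theorem formal_model_equations_general {k : Type*} [Field k]
    {n M : ℕ} (f : Fin M → MvPolynomial (Fin n ⊕ Fin M) k)
    {A : Type*} [CommRing A] [IsLocalRing A] [Algebra k A]
    (hnilp : ∃ N : ℕ, (maximalIdeal A) ^ N = ⊥)
    (x : Fin n → PowerSeries A) (y : Fin M → PowerSeries A)
    (hf : ∀ i, aeval (Sum.elim x y) (f i) = 0)
    {d : ℕ} (q : Polynomial A) (hq : IsWeierstrassPolynomial q d)
    (u : PowerSeries A)
    (hδ : aeval (Sum.elim x y)
        (Matrix.det (Matrix.of fun i j => pderiv (Sum.inr j) (f i))) =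
      (q : PowerSeries A) * u)
    (xbar : Fin n → Polynomial A)
    (ξ : Fin n → PowerSeries A)
    (hx : ∀ i, x i = (xbar i : PowerSeries A) + (q : PowerSeries A) ^ 2 * ξ i)
    (ybar : Fin M → Polynomial A)
    (θ : Fin M → PowerSeries A)
    (hy : ∀ j, y j = (ybar j : PowerSeries A) + (q : PowerSeries A) * θ j) :
    aeval (Sum.elim xbar ybar)
        (Matrix.det (Matrix.of fun i j => pderiv (Sum.inr j) (f i)))
      ∈ Ideal.span {q} ∧
    ∀ i, (Matrix.of fun i j => aeval (Sum.elim xbar ybar)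
            (pderiv (Sum.inr j) (f i))).adjugate.mulVec
          (fun j => aeval (Sum.elim xbar ybar) (f j)) i
        ∈ Ideal.span {q ^ 2} := by
  obtain ⟨N, hN⟩ := hnilp
  have : IsHausdorff (maximalIdeal A) A := .of_pow_eq_bot hN
  have hI : maximalIdeal A ≠ ⊤ := (maximalIdeal.isMaximal A).ne_top
  have hqd := hq.isDistinguishedAt
  let φ : A[X] →ₐ[k] PowerSeries A := (coeToPowerSeries.algHom A).restrictScalars k
  let J := Ideal.span {(q : PowerSeries A)}
  have hqJ : (q : PowerSeries A) ∈ J := Ideal.mem_span_singleton_self _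
  have hxJ : ∀ i, x i - φ (xbar i) ∈ J ^ 2 := fun i => by
    rw [hx i]
    exact add_sub_cancel_left (φ (xbar i)) _ ▸ (J ^ 2).mul_mem_right _ (Ideal.pow_mem_pow hqJ 2)
  have hyJ : ∀ j, y j - φ (ybar j) ∈ J := fun j => by
    rw [hy j]
    exact add_sub_cancel_left (φ (ybar j)) _ ▸ J.mul_mem_right _ hqJ
  have hvw : ∀ s, Sum.elim x y s - (φ ∘ Sum.elim xbar ybar) s ∈ J := by
    rintro (i | j)
    exacts [Ideal.pow_le_self two_ne_zero (hxJ i), hyJ j]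
  have hδw : aeval (φ ∘ Sum.elim xbar ybar) (jacobianInr f).det ∈ J := by
    have hδv : aeval (Sum.elim x y) (jacobianInr f).det ∈ J := hδ ▸ J.mul_mem_right u hqJ
    simpa only [sub_sub_cancel] using sub_mem hδv (aeval_sub_aeval_mem (jacobianInr f).det hvw)
  refine ⟨hqd.mem_span_singleton_of_coe_mem hI ?_, fun i => ?_⟩
  · change φ (aeval _ (jacobianInr f).det) ∈ J
    rwa [comp_aeval_apply]
  · rw [sq]
    refine (hqd.mul hqd).mem_span_singleton_of_coe_mem hI ?_
    change φ ((((jacobianInr f).map (aeval _)).adjugate.mulVec _) i) ∈ Ideal.span {φ (q * q)}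
    rw [map_mul, ← sq, ← Ideal.span_singleton_pow, map_adjugate_jacobianInr_mulVec]
    exact adjugate_jacobianInr_mulVec_mem f hf hxJ hyJ hδw i

/-- Let `f = (f₁,…,f_M) ∈ k[x₁,…,x_n,y₁,…,y_M]^M`, `Df = (∂fᵢ/∂yⱼ)` and `δ = det Df`.
Let `(A, m)` be a local `k`-algebra with `m` nilpotent and `x(t), y(t)` tuples of power
series satisfying `f(x(t),y(t)) = 0` and `δ(x(t),y(t)) = q(t)·u(t)` with `q` a
Weierstrass polynomial of degree `d` and `u` a unit. Writing `y = ȳ + q·θ` (`deg ȳ < d`)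
and `x = x̄ + q²·ξ` (`deg x̄ < 2d`), one has `δ(x̄,ȳ) ∈ q·A[t]` and
`Ad(Df(x̄,ȳ))·f(x̄,ȳ) ∈ q²·A[t]^M`, where `Ad` is the adjugate matrix. -/
theorem formal_model_equations {k : Type*} [Field k]
    {n M : ℕ} (f : Fin M → MvPolynomial (Fin n ⊕ Fin M) k)
    {A : Type*} [CommRing A] [IsLocalRing A] [Algebra k A]
    (hnilp : ∃ N : ℕ, (maximalIdeal A) ^ N = ⊥)
    (x : Fin n → PowerSeries A) (y : Fin M → PowerSeries A)
    (hf : ∀ i, aeval (Sum.elim x y) (f i) = 0)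
    {d : ℕ} (q : Polynomial A) (hq : IsWeierstrassPolynomial q d)
    (u : PowerSeries A) (hu : IsUnit u)
    (hδ : aeval (Sum.elim x y)
        (Matrix.det (Matrix.of fun i j => pderiv (Sum.inr j) (f i))) =
      (q : PowerSeries A) * u)
    (xbar : Fin n → Polynomial A) (hxdeg : ∀ i, (xbar i).degree < (2 * d : ℕ))
    (ξ : Fin n → PowerSeries A)
    (hx : ∀ i, x i = (xbar i : PowerSeries A) + (q : PowerSeries A) ^ 2 * ξ i)
    (ybar : Fin M → Polynomial A) (hydeg : ∀ j, (ybar j).degree < (d : ℕ))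
    (θ : Fin M → PowerSeries A)
    (hy : ∀ j, y j = (ybar j : PowerSeries A) + (q : PowerSeries A) * θ j) :
    aeval (Sum.elim xbar ybar)
        (Matrix.det (Matrix.of fun i j => pderiv (Sum.inr j) (f i)))
      ∈ Ideal.span {q} ∧
    ∀ i, (Matrix.of fun i j => aeval (Sum.elim xbar ybar)
            (pderiv (Sum.inr j) (f i))).adjugate.mulVec
          (fun j => aeval (Sum.elim xbar ybar) (f j)) i
        ∈ Ideal.span {q ^ 2} :=
  formal_model_equations_general f hnilp x y hf q hq u hδ xbar ξ hx ybar θ hy
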